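/- arXiv:2402.19219 — 4 statements merged into one kernel-verified Lean document; each statement's English description precedes it below -/
import Mathlib

section
/- The Airy function Ai, defined as Ai(y) = (1/2π) ∫_ℝ exp(i(η³/3 + yη)) dη (as an improper/oscillatory integral), satisfies the Airy differential equation -v''(y) + y·v(y) = 0 for all real y. -/
/-!
On the real line the integrand `exp (I * (z ^ 3 / 3 + y * z))` only oscillates, but it is entire
and on the line `Im z = 1` its modulus is `exp (1 / 3 - y - u ^ 2)`. Cauchy's theorem on the
rectangle `[-R, R] × [0, 1]`, whose vertical sides contribute `O(1 / R ^ 2)`, identifies `Ai y` with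
`(1 / 2π) ∫ exp (I * ((u + I) ^ 3 / 3 + y * (u + I))) du`, an absolutely convergent integral.
Differentiating twice under it multiplies the integrand by `(I * (u + I)) ^ 2 = -(u + I) ^ 2`, and
`I * ((u + I) ^ 2 + y)` times the integrand is its `u`-derivative, whose integral vanishes.
-/

open MeasureTheory Filter Real Complex Topology

theorem norm_ofReal_add_I_sq (u : ℝ) : ‖(u : ℂ) + I‖ ^ 2 = 1 + u ^ 2 := by
  rw [Complex.sq_norm, Complex.normSq_apply]
  simp
  ring

theorem one_le_norm_ofReal_add_I (u : ℝ) : 1 ≤ ‖(u : ℂ) + I‖ := by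
  simpa using abs_im_le_norm ((u : ℂ) + I)

theorem norm_ofReal_add_I_le (u : ℝ) : ‖(u : ℂ) + I‖ ≤ 1 + u ^ 2 := by
  nlinarith [norm_ofReal_add_I_sq u, one_le_norm_ofReal_add_I u]

theorem integrable_one_add_sq_mul_exp_neg_sq :
    Integrable fun u : ℝ => (1 + u ^ 2) * Real.exp (-u ^ 2) := by
  have h0 := integrable_exp_neg_mul_sq (b := 1) one_pos
  have h2 := integrable_rpow_mul_exp_neg_mul_sq (b := 1) one_pos (s := 2) (by norm_num)
  simp only [Real.rpow_two, neg_mul, one_mul] at h0 h2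
  simp_rw [add_mul, one_mul]
  exact h0.add h2

noncomputable def airyIntegrand (y : ℝ) (z : ℂ) : ℂ :=
  Complex.exp (I * (z ^ 3 / 3 + y * z))

noncomputable def airyShifted (y u : ℝ) : ℂ :=
  airyIntegrand y (u + I)

section
variable (y : ℝ)

theorem differentiable_airyIntegrand : Differentiable ℂ (airyIntegrand y) := by
  unfold airyIntegrand
  fun_prop

theorem norm_airyIntegrand (s t : ℝ) :
    ‖airyIntegrand y (s + t * I)‖ = Real.exp (-(s ^ 2 * t - t ^ 3 / 3 + y * t)) := by
  rw [airyIntegrand, Complex.norm_exp]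
  congr 1
  simp [pow_succ]
  ring

theorem norm_airyShifted (u : ℝ) :
    ‖airyShifted y u‖ = Real.exp (1 / 3 - y) * Real.exp (-u ^ 2) := by
  have h := norm_airyIntegrand y u 1
  rw [ofReal_one, one_mul] at h
  rw [airyShifted, h, ← Real.exp_add]
  ring_nf

theorem continuous_airyShifted : Continuous (airyShifted y) :=
  (differentiable_airyIntegrand y).continuous.comp (by fun_prop)

theorem norm_mul_airyShifted_le {w : ℂ} {C u : ℝ} (hw : ‖w‖ ≤ C * (1 + u ^ 2)) :
    ‖w * airyShifted y u‖ ≤ C * Real.exp (1 / 3 - y) * ((1 + u ^ 2) * Real.exp (-u ^ 2)) := by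
  rw [norm_mul, norm_airyShifted]
  calc ‖w‖ * (Real.exp (1 / 3 - y) * Real.exp (-u ^ 2))
      ≤ C * (1 + u ^ 2) * (Real.exp (1 / 3 - y) * Real.exp (-u ^ 2)) := by gcongr
    _ = _ := by ring

theorem integrable_mul_airyShifted {w : ℝ → ℂ} {C : ℝ} (hw : Continuous w)
    (hC : ∀ u, ‖w u‖ ≤ C * (1 + u ^ 2)) :
    Integrable fun u => w u * airyShifted y u :=
  (integrable_one_add_sq_mul_exp_neg_sq.const_mul _).mono'
    (hw.mul (continuous_airyShifted y)).aestronglyMeasurable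
    (.of_forall fun u => norm_mul_airyShifted_le y (hC u))

theorem integrable_airyShifted : Integrable (airyShifted y) := by
  simpa using integrable_mul_airyShifted y (w := 1) (C := 1) continuous_const
    (fun u => by simp [sq_nonneg])

theorem hasDerivAt_airyShifted_param (u : ℝ) :
    HasDerivAt (fun x => airyShifted x u) (I * (u + I) * airyShifted y u) y := by
  have h : HasDerivAt (fun x : ℂ => I * (((u : ℂ) + I) ^ 3 / 3 + x * (u + I))) (I * (u + I)) y := by
    simpa using (((hasDerivAt_id (y : ℂ)).mul_const ((u : ℂ) + I)).const_add _).const_mul I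
  exact h.cexp.comp_ofReal.congr_deriv (mul_comm _ _)

theorem hasDerivAt_airyShifted (u : ℝ) :
    HasDerivAt (airyShifted y) (I * ((u + I) ^ 2 + y) * airyShifted y u) u := by
  have h : HasDerivAt (fun z : ℂ => I * ((z + I) ^ 3 / 3 + y * (z + I))) (I * ((u + I) ^ 2 + y)) u := by
    have h0 : HasDerivAt (fun z : ℂ => z + I) 1 u := (hasDerivAt_id _).add_const _
    simpa using (((h0.pow 3).div_const 3).add (h0.const_mul (y : ℂ))).const_mul I
  exact h.cexp.comp_ofReal.congr_deriv (mul_comm _ _)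

theorem hasDerivAt_integral_mul_airyShifted {w : ℝ → ℂ} {C : ℝ} (hw : Continuous w)
    (hC : ∀ u : ℝ, ‖(u + I) * w u‖ ≤ C * (1 + u ^ 2)) :
    HasDerivAt (fun x => ∫ u, w u * airyShifted x u)
      (∫ u, I * (u + I) * w u * airyShifted y u) y := by
  have hw' : ∀ u : ℝ, ‖w u‖ ≤ C * (1 + u ^ 2) := fun u =>
    calc ‖w u‖ ≤ ‖(u : ℂ) + I‖ * ‖w u‖ :=
          le_mul_of_one_le_left (norm_nonneg _) (one_le_norm_ofReal_add_I u)
      _ ≤ _ := by rw [← norm_mul]; exact hC u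
  have hIw : Continuous fun u : ℝ => I * (u + I) * w u := by fun_prop
  refine (hasDerivAt_integral_of_dominated_loc_of_deriv_le (Metric.ball_mem_nhds y one_pos)
    (.of_forall fun x => (hw.mul (continuous_airyShifted x)).aestronglyMeasurable)
    (integrable_mul_airyShifted y hw hw')
    (hIw.mul (continuous_airyShifted y)).aestronglyMeasurable
    (F' := fun x u => I * (u + I) * w u * airyShifted x u)
    (bound := fun u => C * Real.exp (4 / 3 - y) * ((1 + u ^ 2) * Real.exp (-u ^ 2)))
    (.of_forall fun u x hx => ?_) (integrable_one_add_sq_mul_exp_neg_sq.const_mul _)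
    (.of_forall fun u x _ => ?_)).2
  · have hx : y - 1 < x := by
      rw [Metric.mem_ball, Real.dist_eq] at hx
      linarith [(abs_lt.1 hx).1]
    refine (norm_mul_airyShifted_le x (by simpa [mul_assoc] using hC u)).trans ?_
    have hC0 : 0 ≤ C := nonneg_of_mul_nonneg_left ((norm_nonneg _).trans (hC 0)) (by positivity)
    exact mul_le_mul_of_nonneg_right
      (mul_le_mul_of_nonneg_left (Real.exp_le_exp.2 (by linarith)) hC0) (by positivity)
  · simpa [mul_assoc, mul_left_comm] using (hasDerivAt_airyShifted_param x u).const_mul (w u)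

theorem integral_mul_airyShifted_eq_zero :
    ∫ u : ℝ, ((u + I) ^ 2 + y) * airyShifted y u = 0 := by
  have hbound : ∀ u : ℝ, ‖I * (((u : ℂ) + I) ^ 2 + y)‖ ≤ (1 + |y|) * (1 + u ^ 2) := fun u => by
    calc ‖I * (((u : ℂ) + I) ^ 2 + y)‖ = ‖((u : ℂ) + I) ^ 2 + y‖ := by simp
      _ ≤ ‖((u : ℂ) + I) ^ 2‖ + ‖(y : ℂ)‖ := norm_add_le _ _
      _ = ‖(u : ℂ) + I‖ ^ 2 + |y| := by rw [norm_pow, Complex.norm_real, Real.norm_eq_abs]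
      _ ≤ (1 + |y|) * (1 + u ^ 2) := by
          rw [norm_ofReal_add_I_sq]; nlinarith [abs_nonneg y, sq_nonneg u]
  have h := integral_eq_zero_of_hasDerivAt_of_integrable (hasDerivAt_airyShifted y)
    (integrable_mul_airyShifted y (by fun_prop) hbound) (integrable_airyShifted y)
  simpa only [mul_assoc, integral_const_mul, mul_eq_zero, I_ne_zero, false_or] using h

theorem airyShifted_integral_ode :
    -deriv (deriv fun x => ∫ u, airyShifted x u) y + y * ∫ u, airyShifted y u = 0 := by
  have hsq_norm : ∀ u : ℝ, ‖((u : ℂ) + I) ^ 2‖ = 1 + u ^ 2 := fun u => by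
    rw [norm_pow, norm_ofReal_add_I_sq]
  have hD1 : deriv (fun x => ∫ u, airyShifted x u)
      = fun x => ∫ u, I * (u + I) * airyShifted x u := funext fun x => by
    simpa using (hasDerivAt_integral_mul_airyShifted x (w := fun _ => 1) (C := 1)
      continuous_const (fun u => by simpa using norm_ofReal_add_I_le u)).deriv
  have hD2 := hasDerivAt_integral_mul_airyShifted y (w := fun u : ℝ => I * (u + I)) (C := 1)
    (by fun_prop) (fun u => by simp [← sq, norm_ofReal_add_I_sq])
  have hsq : ∫ u, I * (u + I) * (I * (u + I)) * airyShifted y u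
      = -∫ u, (u + I) ^ 2 * airyShifted y u := by
    rw [← integral_neg]
    congr 1 with u
    linear_combination ((u + I) ^ 2 * airyShifted y u) * I_sq
  have hsplit : ∫ u : ℝ, ((u + I) ^ 2 + y) * airyShifted y u
      = (∫ u, (u + I) ^ 2 * airyShifted y u) + y * ∫ u, airyShifted y u := by
    simp_rw [add_mul]
    rw [integral_add (integrable_mul_airyShifted y (C := 1) (by fun_prop) (by simp [hsq_norm]))
      ((integrable_airyShifted y).const_mul _), integral_const_mul]
  rw [hD1, hD2.deriv, hsq]
  linear_combination integral_mul_airyShifted_eq_zero y - hsplit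

theorem intervalIntegral_airyIntegrand_eq (R : ℝ) :
    ∫ x in (-R)..R, airyIntegrand y x
      = (∫ u in (-R)..R, airyShifted y u)
        - I * (∫ t in (0 : ℝ)..1, airyIntegrand y (R + t * I))
        + I * (∫ t in (0 : ℝ)..1, airyIntegrand y (-R + t * I)) := by
  have H := integral_boundary_rect_eq_zero_of_differentiableOn (airyIntegrand y)
    ((-R : ℝ) : ℂ) ((R : ℝ) + I) (differentiable_airyIntegrand y).differentiableOn
  simp only [add_re, ofReal_re, I_re, add_zero, add_im, ofReal_im, I_im, zero_add, ofReal_zero,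
    zero_mul, ofReal_one, one_mul, smul_eq_mul, ofReal_neg, neg_re, neg_im, neg_zero] at H
  simp only [airyShifted]
  linear_combination H

theorem norm_integral_airyIntegrand_vertical_le {s : ℝ} (hs : s ≠ 0) :
    ‖∫ t in (0 : ℝ)..1, airyIntegrand y (s + t * I)‖ ≤ Real.exp (1 / 3 + |y|) / s ^ 2 := by
  -- the factor `t ^ 0` puts the bound in the shape of `intervalIntegral_pow_mul_exp_neg_le`
  have hbound : ∀ t ∈ Set.Ioc (0 : ℝ) 1, ‖airyIntegrand y (s + t * I)‖
      ≤ Real.exp (1 / 3 + |y|) * (t ^ 0 * Real.exp (-(s ^ 2 * t))) := fun t ⟨ht0, ht1⟩ => by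
    rw [norm_airyIntegrand, pow_zero, one_mul, ← Real.exp_add]
    refine Real.exp_le_exp.2 ?_
    nlinarith [neg_abs_le y, abs_nonneg y, pow_le_one₀ ht0.le ht1 (n := 3)]
  calc ‖∫ t in (0 : ℝ)..1, airyIntegrand y (s + t * I)‖
      ≤ ∫ t in (0 : ℝ)..1, Real.exp (1 / 3 + |y|) * (t ^ 0 * Real.exp (-(s ^ 2 * t))) :=
        intervalIntegral.norm_integral_le_of_norm_le zero_le_one (.of_forall hbound)
          (Continuous.intervalIntegrable (by fun_prop) 0 1)
    _ ≤ Real.exp (1 / 3 + |y|) * (Nat.factorial 0 / (s ^ 2) ^ (0 + 1)) := by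
        rw [intervalIntegral.integral_const_mul]
        gcongr
        exact intervalIntegral_pow_mul_exp_neg_le zero_le_one (by positivity)
    _ = Real.exp (1 / 3 + |y|) / s ^ 2 := by simp [div_eq_mul_inv]

theorem tendsto_integral_airyIntegrand_vertical :
    Tendsto (fun s : ℝ => ∫ t in (0 : ℝ)..1, airyIntegrand y (s + t * I)) (cocompact ℝ) (𝓝 0) := by
  refine squeeze_zero_norm' (a := fun s => Real.exp (1 / 3 + |y|) / s ^ 2) ?_ ?_
  · filter_upwards [(isCompact_singleton (x := (0 : ℝ))).compl_mem_cocompact] with s hs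
    exact norm_integral_airyIntegrand_vertical_le y hs
  have h : Tendsto (fun s : ℝ => ‖s‖ ^ 2) (cocompact ℝ) atTop :=
    (tendsto_pow_atTop two_ne_zero).comp tendsto_norm_cocompact_atTop
  simpa [div_eq_mul_inv] using h.inv_tendsto_atTop.const_mul (Real.exp (1 / 3 + |y|))

theorem tendsto_intervalIntegral_airyIntegrand :
    Tendsto (fun R : ℝ => ∫ x in (-R)..R, airyIntegrand y x) atTop (𝓝 (∫ u, airyShifted y u)) := by
  have hline := intervalIntegral_tendsto_integral (integrable_airyShifted y)
    tendsto_neg_atTop_atBot tendsto_id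
  have hright := (tendsto_integral_airyIntegrand_vertical y).comp
    (tendsto_id.mono_right atTop_le_cocompact : Tendsto id atTop (cocompact ℝ))
  have hleft := (tendsto_integral_airyIntegrand_vertical y).comp
    (tendsto_neg_atTop_atBot.mono_right atBot_le_cocompact :
      Tendsto (fun R : ℝ => -R) atTop (cocompact ℝ))
  simpa [intervalIntegral_airyIntegrand_eq] using
    (hline.sub (hright.const_mul I)).add (hleft.const_mul I)

end

/-- The Airy function `Ai`, defined pointwise as the oscillatory integral
`Ai(y) = (1/2π) ∫_ℝ exp(i(η³/3 + yη)) dη` (limit of integrals over `[-R,R]`),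
satisfies `-Ai''(y) + y·Ai(y) = 0` for all real `y`. -/
theorem airy_ode (Ai : ℝ → ℂ)
    (hAi : ∀ y : ℝ, Tendsto
      (fun R : ℝ => (1 / (2 * (π : ℂ))) *
        ∫ η in (-R)..R, Complex.exp (Complex.I * ((η : ℂ) ^ 3 / 3 + (y : ℂ) * η)))
      atTop (nhds (Ai y))) :
    ∀ y : ℝ, -(deriv (deriv Ai) y) + (y : ℂ) * Ai y = 0 := by
  have hAi_eq : Ai = fun y => 1 / (2 * (π : ℂ)) * ∫ u, airyShifted y u := funext fun y =>
    tendsto_nhds_unique (hAi y) ((tendsto_intervalIntegral_airyIntegrand y).const_mul _)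
  intro y
  rw [hAi_eq, deriv_const_mul_field', deriv_const_mul_field']
  linear_combination 1 / (2 * (π : ℂ)) * airyShifted_integral_ode y
end

section
/- Let V₁, V₂ be real-analytic near 0 with V₁(0) = V₂(0) = 0, V₁'(0) > 0, V₂'(0) > 0, and suppose V₁^{(k)}(0) = V₂^{(k)}(0) for 0 ≤ k ≤ n-1 while V₁^{(n)}(0) ≠ V₂^{(n)}(0) for some n ≥ 2. Let a_j(E) be the unique root of V_j = E near 0. Then as E → 0, a₂(E) - a₁(E) = (q_n/√v₀)·(E/v₀)ⁿ + O(E^{n+1}), where v₀ = √(V₁'(0)V₂'(0)) and q_n = (V₁^{(n)}(0) - V₂^{(n)}(0)) / (n!·(V₁'(0)V₂'(0))^{1/4}). -/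
/-!
Write `x_j = a_j(E)`, `v = V₁'(0) = V₂'(0)` and `δ = V₁ - V₂`. Subtracting `V₁(x₁) = E = V₂(x₂)`
gives `V₁(x₂) - V₁(x₁) = δ(x₂)`, and since `V₁` is analytic,
`V₁(x₂) - V₁(x₁) = (v + O(E)) (x₂ - x₁)`; hence `x₂ - x₁ = δ(x₂) / v + O(E^{n+1})`.
Taylor's formula gives `δ(x) = c xⁿ + O(x^{n+1})` with `c = (V₁⁽ⁿ⁾(0) - V₂⁽ⁿ⁾(0)) / n!`,
and `x₂ = E / v + O(E²)`, so `δ(x₂) = c (E / v)ⁿ + O(E^{n+1})`.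
-/

open Filter Asymptotics
open scoped Topology Nat

variable {𝕜 : Type*} [NontriviallyNormedField 𝕜] {α : Type*} {l : Filter α}

theorem AnalyticAt.isBigO_sub_monomial_of_iteratedDeriv_eq_zero [CompleteSpace 𝕜] [CharZero 𝕜]
    {f : 𝕜 → 𝕜} (hf : AnalyticAt 𝕜 f 0) {n : ℕ} (h : ∀ k < n, iteratedDeriv k f 0 = 0) :
    (fun x => f x - iteratedDeriv n f 0 / n ! * x ^ n) =O[𝓝 0] (· ^ (n + 1)) := by
  have hpartial (x : 𝕜) :
      (FormalMultilinearSeries.ofScalars 𝕜 fun k => iteratedDeriv k f 0 / k !).partialSum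
        (n + 1) x = iteratedDeriv n f 0 / n ! * x ^ n := by
    rw [FormalMultilinearSeries.partialSum, Finset.sum_range_succ,
      Finset.sum_eq_zero fun k hk => by simp [h k (Finset.mem_range.mp hk)]]
    simp [mul_comm]
  have := hf.hasFPowerSeriesAt.isBigO_sub_partialSum_pow (n + 1)
  simp only [zero_add, hpartial] at this
  exact this.trans ((isBigO_refl (· ^ (n + 1)) _).norm_left.congr_left fun x => by simp)

theorem AnalyticAt.isBigO_image_sub_image_sub_deriv [CompleteSpace 𝕜] [CharZero 𝕜]
    {f : 𝕜 → 𝕜} {x : 𝕜} (hf : AnalyticAt 𝕜 f x) :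
    (fun y : 𝕜 × 𝕜 => f y.1 - f y.2 - deriv f x * (y.1 - y.2)) =O[𝓝 (x, x)]
      fun y => ‖y - (x, x)‖ * ‖y.1 - y.2‖ := by
  simpa [FormalMultilinearSeries.ofScalars_apply_eq, mul_comm]
    using hf.hasFPowerSeriesAt.isBigO_image_sub_norm_mul_norm_sub

theorem Asymptotics.IsBigO.pow_succ_sub_pow_succ {x y g h : α → 𝕜}
    (hx : x =O[l] g) (hy : y =O[l] g) (hxy : (fun t => x t - y t) =O[l] h) (n : ℕ) :
    (fun t => x t ^ (n + 1) - y t ^ (n + 1)) =O[l] fun t => g t ^ n * h t := by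
  have hsum : (fun t => ∑ i ∈ Finset.range (n + 1), x t ^ i * y t ^ (n - i)) =O[l]
      fun t => g t ^ n :=
    IsBigO.fun_sum fun i hi => ((hx.pow i).mul (hy.pow (n - i))).congr_right fun t => by
      rw [← pow_add, Nat.add_sub_cancel' (Nat.lt_succ_iff.mp (Finset.mem_range.mp hi))]
  exact (hsum.mul hxy).congr_left fun t => by simpa using geom_sum₂_mul (x t) (y t) (n + 1)

theorem isBigO_of_hasDerivAt_of_apply_eq {V : 𝕜 → 𝕜} {v : 𝕜} (hV : HasDerivAt V v 0)
    (hv : v ≠ 0) (hV0 : V 0 = 0) {a e : α → 𝕜} (ha : Tendsto a l (𝓝 0))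
    (hroot : ∀ᶠ t in l, V (a t) = e t) : a =O[l] e := by
  have hlin : (fun x => V x - v * x) =o[𝓝 0] fun x => v * x := by
    have := hasDerivAt_iff_isLittleO_nhds_zero.mp hV
    simp only [zero_add, hV0, sub_zero, smul_eq_mul, mul_comm _ v] at this
    exact this.trans_isBigO (isBigO_self_const_mul hv _ _)
  have hva : (fun t => v * a t) =O[l] e :=
    (hlin.comp_tendsto ha).right_isBigO_add.congr' .rfl
      (hroot.mono fun t ht => by simp [Function.comp, ht])
  exact (isBigO_self_const_mul hv a l).trans hva

theorem isBigO_sub_div_of_apply_eq {V : 𝕜 → 𝕜} {v : 𝕜}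
    (hV : (fun x => V x - v * x) =O[𝓝 0] (· ^ 2)) (hv : v ≠ 0) {a e : α → 𝕜}
    (ha : Tendsto a l (𝓝 0)) (hae : a =O[l] e) (hroot : ∀ᶠ t in l, V (a t) = e t) :
    (fun t => a t - e t / v) =O[l] fun t => e t ^ 2 :=
  (((hV.comp_tendsto ha).trans (hae.pow 2)).const_mul_left (-v⁻¹)).congr'
    (hroot.mono fun t ht => by simp only [Function.comp, ← ht]; field_simp; ring) .rfl

theorem AnalyticAt.isBigO_sub_sub_div_deriv [CompleteSpace 𝕜] [CharZero 𝕜] {f : 𝕜 → 𝕜}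
    (hf : AnalyticAt 𝕜 f 0) (hf' : deriv f 0 ≠ 0) {x₁ x₂ g : α → 𝕜}
    (hg : Tendsto g l (𝓝 0)) (h₁ : x₁ =O[l] g) (h₂ : x₂ =O[l] g) :
    (fun t => x₂ t - x₁ t - (f (x₂ t) - f (x₁ t)) / deriv f 0) =O[l]
      fun t => g t * (f (x₂ t) - f (x₁ t)) := by
  set v := deriv f 0
  have hx : Tendsto (fun t => (x₂ t, x₁ t)) l (𝓝 (0, 0)) :=
    (h₂.trans_tendsto hg).prodMk_nhds (h₁.trans_tendsto hg)
  have hrem : (fun t => f (x₂ t) - f (x₁ t) - v * (x₂ t - x₁ t)) =O[l]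
      fun t => g t * (x₂ t - x₁ t) :=
    (hf.isBigO_image_sub_image_sub_deriv.comp_tendsto hx).trans <|
      ((h₂.prod_left h₁).norm_left.congr_left fun t => by simp).mul
        (isBigO_refl (fun t => x₂ t - x₁ t) l).norm_left
  have hsmall : (fun t => f (x₂ t) - f (x₁ t) - v * (x₂ t - x₁ t)) =o[l]
      fun t => v * (x₂ t - x₁ t) :=
    hrem.trans_isLittleO <| (((isLittleO_one_iff 𝕜).mpr hg).mul_isBigO
      (isBigO_refl (fun t => x₂ t - x₁ t) l)).trans_isBigO
        ((isBigO_self_const_mul hf' _ l).congr_left fun t => (one_mul _).symm)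
  have hdiff : (fun t => x₂ t - x₁ t) =O[l] fun t => f (x₂ t) - f (x₁ t) :=
    (isBigO_self_const_mul hf' _ l).trans <|
      hsmall.right_isBigO_add.congr_right fun t => by ring
  exact ((hrem.trans (isBigO_refl g l |>.mul hdiff)).const_mul_left (-v⁻¹)).congr_left
    fun t => by field_simp; ring

theorem isBigO_root_sub_root_sub_monomial [CompleteSpace 𝕜] [CharZero 𝕜]
    {V₁ V₂ a₁ a₂ : 𝕜 → 𝕜} {n : ℕ} (hn : n ≠ 0)
    (hV₁ : AnalyticAt 𝕜 V₁ 0) (hV₂ : AnalyticAt 𝕜 V₂ 0) (hV₁0 : V₁ 0 = 0) (hV₂0 : V₂ 0 = 0)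
    (hv₁ : deriv V₁ 0 ≠ 0) (hv : deriv V₂ 0 = deriv V₁ 0)
    (hagree : ∀ k < n, iteratedDeriv k V₁ 0 = iteratedDeriv k V₂ 0)
    (ha₁ : Tendsto a₁ (𝓝 0) (𝓝 0)) (ha₂ : Tendsto a₂ (𝓝 0) (𝓝 0))
    (hroot₁ : ∀ᶠ E in 𝓝 0, V₁ (a₁ E) = E) (hroot₂ : ∀ᶠ E in 𝓝 0, V₂ (a₂ E) = E) :
    (fun E => a₂ E - a₁ E - (iteratedDeriv n V₁ 0 - iteratedDeriv n V₂ 0) / n ! / deriv V₁ 0 *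
      (E / deriv V₁ 0) ^ n) =O[𝓝 0] (· ^ (n + 1)) := by
  obtain ⟨m, rfl⟩ : ∃ m, n = m + 1 := ⟨n - 1, by omega⟩
  set v := deriv V₁ 0
  set c := (iteratedDeriv (m + 1) V₁ 0 - iteratedDeriv (m + 1) V₂ 0) / (m + 1)!
  have hδ : (fun x => (V₁ - V₂) x - c * x ^ (m + 1)) =O[𝓝 0] (· ^ (m + 2)) := by
    have := (hV₁.sub hV₂).isBigO_sub_monomial_of_iteratedDeriv_eq_zero (n := m + 1) fun k hk => by
      rw [iteratedDeriv_sub hV₁.contDiffAt hV₂.contDiffAt, hagree k hk, sub_self]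
    rwa [iteratedDeriv_sub hV₁.contDiffAt hV₂.contDiffAt] at this
  have hlin₂ : (fun x => V₂ x - v * x) =O[𝓝 0] (· ^ 2) := by
    simpa [hv, hV₂0] using hV₂.isBigO_sub_monomial_of_iteratedDeriv_eq_zero (n := 1)
      fun k hk => by simp [Nat.lt_one_iff.mp hk, hV₂0]
  have hO₁ : a₁ =O[𝓝 0] id :=
    isBigO_of_hasDerivAt_of_apply_eq hV₁.differentiableAt.hasDerivAt hv₁ hV₁0 ha₁ hroot₁
  have hO₂ : a₂ =O[𝓝 0] id :=
    isBigO_of_hasDerivAt_of_apply_eq (hv ▸ hV₂.differentiableAt.hasDerivAt) hv₁ hV₂0 ha₂ hroot₂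
  have hexp₂ : (fun E => a₂ E - E / v) =O[𝓝 0] fun E => E ^ 2 :=
    isBigO_sub_div_of_apply_eq hlin₂ hv₁ ha₂ hO₂ hroot₂
  have hδa : (fun E => (V₁ - V₂) (a₂ E) - c * a₂ E ^ (m + 1)) =O[𝓝 0] (· ^ (m + 2)) :=
    (hδ.comp_tendsto ha₂).trans (hO₂.pow _)
  have hΔ : (fun E => V₁ (a₂ E) - V₁ (a₁ E)) =O[𝓝 0] (· ^ (m + 1)) :=
    ((hδa.trans (isLittleO_pow_pow (by omega)).isBigO).add
      ((hO₂.pow (m + 1)).const_mul_left c)).congr'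
      (hroot₁.mp (hroot₂.mono fun E h₂ h₁ => by simp [h₁, h₂])) .rfl
  have hlead : (fun E => a₂ E - a₁ E - (V₁ (a₂ E) - V₁ (a₁ E)) / v) =O[𝓝 0] (· ^ (m + 2)) :=
    (hV₁.isBigO_sub_sub_div_deriv hv₁ tendsto_id hO₁ hO₂).trans <|
      ((isBigO_refl id _).mul hΔ).congr_right fun E => by simp only [id]; ring
  have hEv : (fun E => E / v) =O[𝓝 0] id :=
    (isBigO_const_mul_self v⁻¹ id _).congr_left fun E => inv_mul_eq_div v E
  have hpow : (fun E => a₂ E ^ (m + 1) - (E / v) ^ (m + 1)) =O[𝓝 0] (· ^ (m + 2)) :=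
    (hO₂.pow_succ_sub_pow_succ hEv hexp₂ m).congr_right fun E => by simp only [id]; ring
  refine ((hlead.add (hδa.const_mul_left v⁻¹)).add (hpow.const_mul_left (c * v⁻¹))).congr'
    (hroot₁.mp (hroot₂.mono fun E h₂ h₁ => ?_)) .rfl
  simp only [Pi.sub_apply]
  linear_combination v⁻¹ * (h₁ - h₂)

theorem Real.mul_self_rpow_one_div_four_mul_sqrt_sqrt_mul_self {v : ℝ} (hv : 0 ≤ v) :
    (v * v) ^ ((1 : ℝ) / 4) * √(√(v * v)) = v := by
  rw [Real.sqrt_mul_self hv, Real.sqrt_eq_rpow, Real.mul_rpow hv hv,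
    ← Real.rpow_add' hv (by norm_num), ← Real.rpow_add' hv (by norm_num)]
  norm_num

theorem turning_points_difference_general (V₁ V₂ : ℝ → ℝ) (n : ℕ) (hn : 2 ≤ n)
    (hV₁ : AnalyticAt ℝ V₁ 0) (hV₂ : AnalyticAt ℝ V₂ 0)
    (hV₁0 : V₁ 0 = 0) (hV₂0 : V₂ 0 = 0)
    (hV₁' : 0 < deriv V₁ 0)
    (hagree : ∀ k < n, iteratedDeriv k V₁ 0 = iteratedDeriv k V₂ 0)
    (a₁ a₂ : ℝ → ℝ) (ha₁0 : a₁ 0 = 0) (ha₂0 : a₂ 0 = 0)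
    (ha₁c : ContinuousAt a₁ 0) (ha₂c : ContinuousAt a₂ 0)
    (hroot₁ : ∀ᶠ E in nhds (0:ℝ), V₁ (a₁ E) = E)
    (hroot₂ : ∀ᶠ E in nhds (0:ℝ), V₂ (a₂ E) = E) :
    (fun E : ℝ => a₂ E - a₁ E -
        (iteratedDeriv n V₁ 0 - iteratedDeriv n V₂ 0) /
          ((n.factorial : ℝ) * (deriv V₁ 0 * deriv V₂ 0) ^ ((1:ℝ)/4)) /
          Real.sqrt (Real.sqrt (deriv V₁ 0 * deriv V₂ 0)) *
        (E / Real.sqrt (deriv V₁ 0 * deriv V₂ 0)) ^ n)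
      =O[nhds 0] (fun E : ℝ => E ^ (n + 1)) := by
  have hv : deriv V₂ 0 = deriv V₁ 0 := by simpa using (hagree 1 (by omega)).symm
  have hcoeff (D : ℝ) : D / (n ! * (deriv V₁ 0 * deriv V₁ 0) ^ ((1 : ℝ) / 4)) /
      √(√(deriv V₁ 0 * deriv V₁ 0)) = D / n ! / deriv V₁ 0 := by
    rw [div_div, mul_assoc, Real.mul_self_rpow_one_div_four_mul_sqrt_sqrt_mul_self hV₁'.le,
      div_div]
  rw [hv, hcoeff, Real.sqrt_mul_self hV₁'.le]
  exact isBigO_root_sub_root_sub_monomial (by omega) hV₁ hV₂ hV₁0 hV₂0 hV₁'.ne' hv hagree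
    (by simpa [ha₁0] using ha₁c.tendsto)
    (by simpa [ha₂0] using ha₂c.tendsto) hroot₁ hroot₂

/-- With `V₁, V₂` real-analytic near `0`, `V_j(0)=0`, `V_j'(0)>0`,
agreeing to order `n-1` at `0` but not at order `n` (`n ≥ 2`), and `a_j(E)` the
root of `V_j = E` near `0`, one has
`a₂(E) - a₁(E) = (q_n/√v₀)(E/v₀)ⁿ + O(E^{n+1})` as `E → 0`, where
`v₀ = √(V₁'(0)V₂'(0))` and `q_n = (V₁⁽ⁿ⁾(0)-V₂⁽ⁿ⁾(0))/(n!(V₁'(0)V₂'(0))^{1/4})`. -/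
theorem turning_points_difference (V₁ V₂ : ℝ → ℝ) (n : ℕ) (hn : 2 ≤ n)
    (hV₁ : AnalyticAt ℝ V₁ 0) (hV₂ : AnalyticAt ℝ V₂ 0)
    (hV₁0 : V₁ 0 = 0) (hV₂0 : V₂ 0 = 0)
    (hV₁' : 0 < deriv V₁ 0) (hV₂' : 0 < deriv V₂ 0)
    (hagree : ∀ k < n, iteratedDeriv k V₁ 0 = iteratedDeriv k V₂ 0)
    (hneq : iteratedDeriv n V₁ 0 ≠ iteratedDeriv n V₂ 0)
    (a₁ a₂ : ℝ → ℝ) (ha₁0 : a₁ 0 = 0) (ha₂0 : a₂ 0 = 0)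
    (ha₁c : ContinuousAt a₁ 0) (ha₂c : ContinuousAt a₂ 0)
    (hroot₁ : ∀ᶠ E in nhds (0:ℝ), V₁ (a₁ E) = E)
    (hroot₂ : ∀ᶠ E in nhds (0:ℝ), V₂ (a₂ E) = E) :
    (fun E : ℝ => a₂ E - a₁ E -
        (iteratedDeriv n V₁ 0 - iteratedDeriv n V₂ 0) /
          ((n.factorial : ℝ) * (deriv V₁ 0 * deriv V₂ 0) ^ ((1:ℝ)/4)) /
          Real.sqrt (Real.sqrt (deriv V₁ 0 * deriv V₂ 0)) *
        (E / Real.sqrt (deriv V₁ 0 * deriv V₂ 0)) ^ n)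
      =O[nhds 0] (fun E : ℝ => E ^ (n + 1)) :=
  turning_points_difference_general V₁ V₂ n hn hV₁ hV₂ hV₁0 hV₂0 hV₁' hagree a₁ a₂ ha₁0 ha₂0 ha₁c
    ha₂c hroot₁ hroot₂
end

section
/- Let p₁(x,ξ) = ξ² + V₁(x), p₂(x,ξ) = ξ² + V₂(x) with V₁, V₂ smooth, V₁(0) = V₂(0) = 0, and V₁^{(k)}(0) = V₂^{(k)}(0) for 0 ≤ k ≤ n-1, V₁^{(n)}(0) ≠ V₂^{(n)}(0), V₁'(0) ≠ 0 (n ≥ 2). Let H_{p₁} = 2ξ∂_x - V₁'(x)∂_ξ be the Hamiltonian vector field of p₁. Then H_{p₁}^k p₂(0,0) = 0 for 0 ≤ k ≤ 2n-1, and H_{p₁}^{2n} p₂(0,0) = (-1)ⁿ·((2n)!/n!)·(V₁'(0))ⁿ·(V₂^{(n)}(0) - V₁^{(n)}(0)) ≠ 0. -/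
/-- The Hamiltonian vector field of `p₁(x,ξ) = ξ² + V₁(x)` acting on functions on
phase space: `(H f)(x,ξ) = 2ξ·∂_x f(x,ξ) − V₁'(x)·∂_ξ f(x,ξ)`. -/
noncomputable def hamVF (V₁ : ℝ → ℝ) (f : ℝ × ℝ → ℝ) : ℝ × ℝ → ℝ :=
  fun p => 2 * p.2 * deriv (fun x => f (x, p.2)) p.1 -
    deriv V₁ p.1 * deriv (fun ξ => f (p.1, ξ)) p.2

open Finset
open scoped ContDiff

/-! ### Combinatorial layer -/

def Nc : ℕ → ℕ → ℕ
  | 0, j => if j = 0 then 1 else 0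
  | (k+1), j => (if j = 0 then 0 else Nc k (j-1)) + (j+1) * Nc k (j+1)

lemma Nc_zero_of_lt : ∀ k j, k < j → Nc k j = 0 := by
  intro k
  induction k with
  | zero => intro j hj; simp [Nc]; omega
  | succ k ih =>
      intro j hj
      have h0 : j ≠ 0 := by omega
      simp only [Nc, if_neg h0, ih (j-1) (by omega), ih (j+1) (by omega), mul_zero, add_zero]

lemma Nc_eq : ∀ k j m, k = j + 2*m → Nc k j * (j.factorial * 2^m * m.factorial) = k.factorial := by
  intro k
  induction k with
  | zero =>
      intro j m h
      have hj : j = 0 := by omega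
      have hm : m = 0 := by omega
      subst hj; subst hm; simp [Nc]
  | succ k ih =>
      intro k0 m h
      rcases Nat.eq_zero_or_pos k0 with hj | hj
      · subst hj
        have hm : 1 ≤ m := by omega
        have hk : k = 1 + 2*(m-1) := by omega
        have h1 := ih 1 (m-1) hk
        have hNc : Nc (k+1) 0 = Nc k 1 := by simp [Nc]
        rw [hNc]
        have h2m : 2^m = 2^(m-1) * 2 := by
          rw [← pow_succ]; congr 1; omega
        have hmf : m.factorial = m * (m-1).factorial := by
          rcases Nat.exists_eq_succ_of_ne_zero (by omega : m ≠ 0) with ⟨m', rfl⟩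
          simp [Nat.factorial_succ]
        calc Nc k 1 * (Nat.factorial 0 * 2^m * m.factorial)
            = (Nc k 1 * (Nat.factorial 1 * 2^(m-1) * (m-1).factorial)) * (2*m) := by
              simp only [Nat.factorial]; rw [h2m, hmf]; ring
          _ = k.factorial * (2*m) := by rw [h1]
          _ = (k+1).factorial := by
              rw [Nat.factorial_succ, show 2*m = k+1 by omega]; ring
      · have hj0 : k0 ≠ 0 := by omega
        have hNcs : Nc (k+1) k0 = Nc k (k0-1) + (k0+1) * Nc k (k0+1) := by
          simp [Nc, if_neg hj0]
        rw [hNcs, add_mul]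
        have hk1 : k = (k0-1) + 2*m := by omega
        have h1 := ih (k0-1) m hk1
        have hfj : k0.factorial = k0 * (k0-1).factorial := by
          rcases Nat.exists_eq_succ_of_ne_zero hj0 with ⟨j', rfl⟩
          simp [Nat.factorial_succ]
        have e1 : Nc k (k0-1) * (k0.factorial * 2^m * m.factorial) = k0 * k.factorial := by
          calc Nc k (k0-1) * (k0.factorial * 2^m * m.factorial)
              = (Nc k (k0-1) * ((k0-1).factorial * 2^m * m.factorial)) * k0 := by rw [hfj]; ring
            _ = k0 * k.factorial := by rw [h1]; ring
        rcases Nat.eq_zero_or_pos m with hm | hm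
        · subst hm
          have hz : Nc k (k0+1) = 0 := Nc_zero_of_lt _ _ (by omega)
          rw [e1, hz, Nat.factorial_succ, show k0 = k+1 by omega]
          ring
        · have hk2 : k = (k0+1) + 2*(m-1) := by omega
          have h2 := ih (k0+1) (m-1) hk2
          have e2 : (k0+1) * Nc k (k0+1) * (k0.factorial * 2^m * m.factorial) = 2 * m * k.factorial := by
            have hfj1 : (k0+1).factorial = (k0+1) * k0.factorial := Nat.factorial_succ k0
            have h2m : 2^m = 2 * 2^(m-1) := by
              rw [← pow_succ']; congr 1; omega
            have hmf : m.factorial = m * (m-1).factorial := by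
              rcases Nat.exists_eq_succ_of_ne_zero (by omega : m ≠ 0) with ⟨m', rfl⟩
              simp [Nat.factorial_succ]
            calc (k0+1) * Nc k (k0+1) * (k0.factorial * 2^m * m.factorial)
                = (Nc k (k0+1) * ((k0+1).factorial * 2^(m-1) * (m-1).factorial)) * (2 * m) := by
                  rw [hfj1, h2m, hmf]; ring
              _ = 2 * m * k.factorial := by rw [h2]; ring
          rw [e1, e2, Nat.factorial_succ]
          calc k0 * k.factorial + 2*m*k.factorial = (k0 + 2*m) * k.factorial := by ring
            _ = (k+1) * k.factorial := by rw [show k0 + 2*m = k+1 by omega]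

/-! ### Sequence layer -/

noncomputable def stepSeq (V₁ : ℝ → ℝ) (g : ℕ → ℝ → ℝ) : ℕ → ℝ → ℝ :=
  fun j x => (if j = 0 then 0 else 2 * deriv (g (j-1)) x) - (j+1) * deriv V₁ x * g (j+1) x

noncomputable def evalSeq (B : ℕ) (g : ℕ → ℝ → ℝ) : ℝ × ℝ → ℝ :=
  fun p => ∑ j ∈ Finset.range B, p.2 ^ j * g j p.1

lemma hamVF_evalSeq (V₁ : ℝ → ℝ) (B' : ℕ) (g : ℕ → ℝ → ℝ)
    (hd : ∀ j, Differentiable ℝ (g j)) (hz : ∀ j, B' ≤ j → g j = 0) :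
    hamVF V₁ (evalSeq (B'+1) g) = evalSeq (B'+1) (stepSeq V₁ g) := by
  funext p
  obtain ⟨x, ξ⟩ := p
  simp only [hamVF, evalSeq]
  have hdx : deriv (fun y => ∑ j ∈ range (B'+1), ξ^j * g j y) x
      = ∑ j ∈ range (B'+1), ξ^j * deriv (g j) x := by
    rw [deriv_fun_sum (fun j _ => ((hd j).differentiableAt).const_mul _)]
    exact sum_congr rfl fun j _ => deriv_const_mul _ ((hd j).differentiableAt)
  have hdξ : deriv (fun t => ∑ j ∈ range (B'+1), t^j * g j x) ξ
      = ∑ j ∈ range (B'+1), (j : ℝ) * ξ^(j-1) * g j x := by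
    rw [deriv_fun_sum (fun j _ => (differentiable_pow j).differentiableAt.mul_const _)]
    refine sum_congr rfl fun j _ => ?_
    rw [deriv_mul_const (differentiable_pow j).differentiableAt, deriv_pow_field]
  rw [hdx, hdξ, mul_sum, mul_sum]
  have hrhs : ∑ j ∈ range (B'+1), ξ^j * stepSeq V₁ g j x
      = (∑ j ∈ range (B'+1), ξ^j * (if j = 0 then 0 else 2 * deriv (g (j-1)) x))
        - ∑ j ∈ range (B'+1), ξ^j * (((j:ℝ)+1) * deriv V₁ x * g (j+1) x) := by
    rw [← sum_sub_distrib]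
    refine sum_congr rfl fun j _ => ?_
    simp only [stepSeq]
    rw [mul_sub]
  rw [hrhs]
  congr 1
  · rw [sum_range_succ' (fun j => ξ^j * (if j = 0 then 0 else 2 * deriv (g (j-1)) x)) B']
    rw [sum_range_succ (fun j => 2 * ξ * (ξ^j * deriv (g j) x)) B']
    have hgB : deriv (g B') x = 0 := by
      rw [hz B' le_rfl]; exact deriv_const x 0
    rw [hgB]
    norm_num
    refine sum_congr rfl fun j _ => ?_
    ring
  · rw [sum_range_succ' (fun j => deriv V₁ x * ((j:ℝ) * ξ^(j-1) * g j x)) B']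
    rw [sum_range_succ (fun j => ξ^j * (((j:ℝ)+1) * deriv V₁ x * g (j+1) x)) B']
    have hgB1 : g (B'+1) = 0 := hz (B'+1) (by omega)
    rw [hgB1]
    norm_num
    refine sum_congr rfl fun j _ => ?_
    ring

/-! ### Coefficient layer -/

noncomputable def Wd (V₁ V₂ : ℝ → ℝ) (m : ℕ) : ℝ → ℝ :=
  iteratedDeriv m (fun x => V₂ x - V₁ x)

noncomputable def stepC (V₁ : ℝ → ℝ) (c : ℕ → ℕ → ℝ → ℝ) : ℕ → ℕ → ℝ → ℝ :=
  fun j m x =>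
    (if j = 0 then 0 else
      2 * deriv (c (j-1) m) x + (if m = 0 then 0 else 2 * c (j-1) (m-1) x))
    - (j+1) * deriv V₁ x * c (j+1) m x

noncomputable def evalC (V₁ V₂ : ℝ → ℝ) (M : ℕ) (c : ℕ → ℕ → ℝ → ℝ) : ℕ → ℝ → ℝ :=
  fun j x => ∑ m ∈ Finset.range M, c j m x * Wd V₁ V₂ m x

lemma contDiff_Wd (V₁ V₂ : ℝ → ℝ) (hV₁ : ContDiff ℝ ∞ V₁) (hV₂ : ContDiff ℝ ∞ V₂) (m : ℕ) :
    ContDiff ℝ ∞ (Wd V₁ V₂ m) := by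
  rw [Wd, iteratedDeriv_eq_iterate]
  exact (hV₂.sub hV₁).iterate_deriv m

lemma deriv_Wd (V₁ V₂ : ℝ → ℝ) (m : ℕ) : deriv (Wd V₁ V₂ m) = Wd V₁ V₂ (m+1) :=
  (iteratedDeriv_succ).symm

lemma stepSeq_evalC (V₁ V₂ : ℝ → ℝ) (hV₁ : ContDiff ℝ ∞ V₁) (hV₂ : ContDiff ℝ ∞ V₂)
    (M' : ℕ) (c : ℕ → ℕ → ℝ → ℝ)
    (hsm : ∀ j m, Differentiable ℝ (c j m))
    (hbd : ∀ j, c j M' = 0) :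
    stepSeq V₁ (evalC V₁ V₂ (M'+1) c) = evalC V₁ V₂ (M'+1) (stepC V₁ c) := by
  have hWdiff : ∀ m, Differentiable ℝ (Wd V₁ V₂ m) :=
    fun m => (contDiff_Wd V₁ V₂ hV₁ hV₂ m).differentiable (by simp)
  funext j x
  have hder : ∀ i, deriv (fun y => ∑ m ∈ range (M'+1), c i m y * Wd V₁ V₂ m y) x
      = ∑ m ∈ range (M'+1), (deriv (c i m) x * Wd V₁ V₂ m x + c i m x * Wd V₁ V₂ (m+1) x) := by
    intro i
    rw [deriv_fun_sum (A := fun m y => c i m y * Wd V₁ V₂ m y)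
      (fun m _ => ((hsm i m).differentiableAt).mul ((hWdiff m).differentiableAt))]
    refine sum_congr rfl fun m _ => ?_
    rw [deriv_fun_mul ((hsm i m).differentiableAt) ((hWdiff m).differentiableAt), deriv_Wd]
  simp only [stepSeq, evalC, stepC]
  have key : (if j = 0 then (0:ℝ) else 2 * deriv (evalC V₁ V₂ (M'+1) c (j-1)) x)
      = ∑ m ∈ range (M'+1),
          (if j = 0 then 0 else
            2 * deriv (c (j-1) m) x + (if m = 0 then 0 else 2 * c (j-1) (m-1) x)) * Wd V₁ V₂ m x := by
    by_cases hj : j = 0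
    · simp [hj]
    · rw [if_neg hj, show evalC V₁ V₂ (M'+1) c (j-1)
          = fun y => ∑ m ∈ range (M'+1), c (j-1) m y * Wd V₁ V₂ m y from rfl, hder (j-1)]
      rw [mul_sum]
      have split : ∑ m ∈ range (M'+1),
          2 * (deriv (c (j-1) m) x * Wd V₁ V₂ m x + c (j-1) m x * Wd V₁ V₂ (m+1) x)
        = (∑ m ∈ range (M'+1), 2 * deriv (c (j-1) m) x * Wd V₁ V₂ m x)
          + ∑ m ∈ range (M'+1), 2 * c (j-1) m x * Wd V₁ V₂ (m+1) x := by
        rw [← sum_add_distrib]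
        exact sum_congr rfl fun m _ => by ring
      rw [split]
      have shift : ∑ m ∈ range (M'+1), 2 * c (j-1) m x * Wd V₁ V₂ (m+1) x
          = ∑ m ∈ range (M'+1), (if m = 0 then 0 else 2 * c (j-1) (m-1) x) * Wd V₁ V₂ m x := by
        rw [sum_range_succ' (fun m => (if m = 0 then (0:ℝ) else 2 * c (j-1) (m-1) x) * Wd V₁ V₂ m x) M']
        rw [sum_range_succ (fun m => 2 * c (j-1) m x * Wd V₁ V₂ (m+1) x) M']
        rw [hbd (j-1)]
        norm_num
      rw [shift, ← sum_add_distrib]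
      refine sum_congr rfl fun m _ => ?_
      rw [if_neg hj]
      ring
  rw [key, mul_sum, ← sum_sub_distrib]
  refine sum_congr rfl fun m _ => ?_
  ring

/-! ### The invariant -/

def HamInv (V₁ : ℝ → ℝ) (k : ℕ) (c : ℕ → ℕ → ℝ → ℝ) : Prop :=
  (∀ j m, ContDiff ℝ ∞ (c j m)) ∧
  (∀ j m, k + 2 ≤ j → c j m = 0) ∧
  (∀ j m, k + j < 2*m → c j m = 0) ∧
  (∀ j m x, k + j = 2*m → j ≤ k →
    c j m x = 2^m * (-(deriv V₁ x))^(k-m) * (Nc k j : ℝ))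

lemma inv_step (V₁ : ℝ → ℝ) (hV₁ : ContDiff ℝ ∞ V₁) (k : ℕ) (c : ℕ → ℕ → ℝ → ℝ)
    (h : HamInv V₁ k c) : HamInv V₁ (k+1) (stepC V₁ c) := by
  obtain ⟨hc, hsuppj, hsuppm, htop⟩ := h
  have hder : ∀ a b, ContDiff ℝ ∞ (deriv (c a b)) :=
    fun a b => (contDiff_infty_iff_deriv.mp (hc a b)).2
  have hV₁' : ContDiff ℝ ∞ (deriv V₁) := (contDiff_infty_iff_deriv.mp hV₁).2
  have hder0 : ∀ a b, c a b = 0 → ∀ x, deriv (c a b) x = 0 := by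
    intro a b hab x
    rw [hab]; exact deriv_const x 0
  refine ⟨?_, ?_, ?_, ?_⟩
  · intro j m
    unfold stepC
    split_ifs <;> fun_prop
  · intro j m hj
    funext x
    simp only [stepC, if_neg (by omega : ¬ j = 0)]
    rw [hder0 (j-1) m (hsuppj (j-1) m (by omega)) x,
      hsuppj (j+1) m (by omega)]
    by_cases hm : m = 0
    · simp [hm]
    · rw [if_neg hm, hsuppj (j-1) (m-1) (by omega)]
      simp
  · intro j m hm
    funext x
    by_cases hj : j = 0
    · subst hj
      simp only [stepC, if_pos rfl]
      rw [hsuppm 1 m (by omega)]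
      simp
    · simp only [stepC, if_neg hj]
      have hm1 : m ≠ 0 := by omega
      rw [if_neg hm1, hder0 (j-1) m (hsuppm (j-1) m (by omega)) x,
        hsuppm (j-1) (m-1) (by omega), hsuppm (j+1) m (by omega)]
      simp
  · intro j m x hkm hjk
    by_cases hj : j = 0
    · subst hj
      have hm1 : 1 ≤ m := by omega
      have hk1 : 1 ≤ k := by omega
      simp only [stepC, if_pos rfl]
      rw [htop 1 m x (by omega) (by omega)]
      have hNc : Nc (k+1) 0 = Nc k 1 := by simp [Nc]
      rw [hNc]
      have he : k + 1 - m = (k - m) + 1 := by omega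
      rw [he, pow_succ]
      push_cast
      ring
    · have hm1 : m ≠ 0 := by omega
      simp only [stepC, if_neg hj, if_neg hm1]
      rw [hder0 (j-1) m (hsuppm (j-1) m (by omega)) x]
      rw [htop (j-1) (m-1) x (by omega) (by omega)]
      have hNc : Nc (k+1) j = Nc k (j-1) + (j+1) * Nc k (j+1) := by
        simp [Nc, if_neg hj]
      by_cases hjtop : j = k + 1
      · have hmk : m = k + 1 := by omega
        rw [hsuppj (j+1) m (by omega)]
        rw [hNc, Nc_zero_of_lt k (j+1) (by omega)]
        have e1 : k - (m-1) = 0 := by omega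
        have e2 : k + 1 - m = 0 := by omega
        rw [e1, e2]
        rw [show (2:ℝ)^m = 2^(m-1) * 2 by
          conv_lhs => rw [show m = (m-1)+1 by omega]
          rw [pow_succ]]
        push_cast
        simp
        ring
      · have hjk' : j + 1 ≤ k := by omega
        rw [htop (j+1) m x (by omega) hjk']
        rw [hNc]
        have e1 : k - (m-1) = (k - m) + 1 := by omega
        have e2 : k + 1 - m = (k - m) + 1 := by omega
        rw [e1, e2, pow_succ]
        rw [show (2:ℝ)^m = 2^(m-1) * 2 by
          conv_lhs => rw [show m = (m-1)+1 by omega]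
          rw [pow_succ]]
        push_cast
        ring

/-! ### Initial data -/

noncomputable def p2seq (V₂ : ℝ → ℝ) : ℕ → ℝ → ℝ :=
  fun j => if j = 0 then V₂ else if j = 2 then (fun _ => 1) else 0

noncomputable def chatC : ℕ → ℕ → ℝ → ℝ :=
  fun j m => if j = 1 ∧ m = 1 then (fun _ => (2:ℝ)) else 0

lemma hamInv_chat (V₁ : ℝ → ℝ) : HamInv V₁ 1 chatC := by
  refine ⟨?_, ?_, ?_, ?_⟩
  · intro j m
    unfold chatC
    split_ifs
    exacts [contDiff_const, contDiff_const]
  · intro j m hj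
    simp only [chatC]
    rw [if_neg (fun h => by omega)]
  · intro j m hm
    simp only [chatC]
    rw [if_neg (fun h => by omega)]
  · intro j m x hkm hjk
    have hj1 : j = 1 := by omega
    have hm1 : m = 1 := by omega
    subst hj1; subst hm1
    simp [chatC, Nc]

lemma hamInv_dseq (V₁ : ℝ → ℝ) (hV₁ : ContDiff ℝ ∞ V₁) (i : ℕ) :
    HamInv V₁ (i+1) ((stepC V₁)^[i] chatC) := by
  induction i with
  | zero => exact hamInv_chat V₁
  | succ i ih =>
      rw [Function.iterate_succ_apply']
      exact inv_step V₁ hV₁ (i+1) _ ih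

lemma step_p2seq (V₁ V₂ : ℝ → ℝ) (hV₁ : ContDiff ℝ ∞ V₁) (hV₂ : ContDiff ℝ ∞ V₂)
    (M' : ℕ) (hM : 2 ≤ M') :
    stepSeq V₁ (p2seq V₂) = evalC V₁ V₂ (M'+1) chatC := by
  funext j x
  have hWd1 : Wd V₁ V₂ 1 x = deriv V₂ x - deriv V₁ x := by
    rw [Wd, iteratedDeriv_one]
    exact deriv_fun_sub (hV₂.differentiable (by simp) x)
      (hV₁.differentiable (by simp) x)
  by_cases hj : j = 1
  · subst hj
    have hrhs : evalC V₁ V₂ (M'+1) chatC 1 x = 2 * Wd V₁ V₂ 1 x := by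
      simp only [evalC]
      rw [Finset.sum_eq_single 1]
      · simp [chatC]
      · intro m _ hm
        simp [chatC, hm]
      · intro h
        exact absurd (Finset.mem_range.mpr (by omega)) h
    rw [hrhs, hWd1]
    simp only [stepSeq, p2seq]
    norm_num
    have : deriv (fun _ : ℝ => (1:ℝ)) x = 0 := deriv_const x 1
    ring
  · have hrhs : evalC V₁ V₂ (M'+1) chatC j x = 0 := by
      simp only [evalC]
      refine Finset.sum_eq_zero fun m _ => ?_
      have : chatC j m = 0 := by
        simp only [chatC]
        rw [if_neg (fun h => hj h.1)]
      rw [this]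
      simp
    rw [hrhs]
    rcases j with _ | _ | _ | _ | j
    · simp [stepSeq, p2seq]
    · omega
    · have h1 : deriv (0 : ℝ → ℝ) x = 0 := deriv_const x 0
      simp only [stepSeq, p2seq]
      norm_num [h1]
    · have h1 : deriv (fun _ : ℝ => (1:ℝ)) x = 0 := deriv_const x 1
      simp only [stepSeq, p2seq]
      norm_num [h1]
    · have h1 : deriv (0 : ℝ → ℝ) x = 0 := deriv_const x 0
      simp only [stepSeq, p2seq]
      norm_num [h1]
      rw [if_neg (show ¬ j+1+1+1 = 2 by omega), if_neg (show ¬ j+1+1+1+1+1 = 2 by omega), h1]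
      simp

/-! ### Main theorem -/

/-- With `p₂(x,ξ) = ξ² + V₂(x)`, `V₁, V₂` smooth, vanishing at `0`
and agreeing to order `n-1` at `0` but not at order `n` (`n ≥ 2`), `V₁'(0) ≠ 0`:
`H_{p₁}^k p₂(0,0) = 0` for `0 ≤ k ≤ 2n-1`, and
`H_{p₁}^{2n} p₂(0,0) = (-1)ⁿ((2n)!/n!)(V₁'(0))ⁿ(V₂⁽ⁿ⁾(0) − V₁⁽ⁿ⁾(0)) ≠ 0`. -/
theorem ham_iterate_crossing (V₁ V₂ : ℝ → ℝ) (n : ℕ) (hn : 2 ≤ n)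
    (hV₁ : ContDiff ℝ (⊤ : ℕ∞) V₁) (hV₂ : ContDiff ℝ (⊤ : ℕ∞) V₂)
    (hV₁0 : V₁ 0 = 0) (hV₂0 : V₂ 0 = 0)
    (hagree : ∀ k < n, iteratedDeriv k V₁ 0 = iteratedDeriv k V₂ 0)
    (hneq : iteratedDeriv n V₁ 0 ≠ iteratedDeriv n V₂ 0)
    (hV₁' : deriv V₁ 0 ≠ 0) :
    (∀ k ≤ 2 * n - 1,
      (hamVF V₁)^[k] (fun p : ℝ × ℝ => p.2 ^ 2 + V₂ p.1) (0, 0) = 0) ∧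
    (hamVF V₁)^[2 * n] (fun p : ℝ × ℝ => p.2 ^ 2 + V₂ p.1) (0, 0) =
      (-1) ^ n * (((2 * n).factorial : ℝ) / (n.factorial : ℝ)) *
        (deriv V₁ 0) ^ n * (iteratedDeriv n V₂ 0 - iteratedDeriv n V₁ 0) ∧
    (hamVF V₁)^[2 * n] (fun p : ℝ × ℝ => p.2 ^ 2 + V₂ p.1) (0, 0) ≠ 0 := by
  have hV₁s : ContDiff ℝ ∞ V₁ := hV₁.of_le (by simp)
  have hV₂s : ContDiff ℝ ∞ V₂ := hV₂.of_le (by simp)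
  set p₂ : ℝ × ℝ → ℝ := fun p => p.2 ^ 2 + V₂ p.1 with hp₂def
  have hitd : ∀ (f : ℝ → ℝ), ContDiff ℝ ∞ f → ∀ m, ContDiff ℝ ∞ (iteratedDeriv m f) := by
    intro f hf m
    rw [iteratedDeriv_eq_iterate]
    exact hf.iterate_deriv m
  have hWdval : ∀ m, Wd V₁ V₂ m = fun x => iteratedDeriv m V₂ x - iteratedDeriv m V₁ x := by
    intro m
    unfold Wd
    induction m with
    | zero => simp [iteratedDeriv_zero]
    | succ m ih =>
        rw [iteratedDeriv_succ, ih, iteratedDeriv_succ, iteratedDeriv_succ]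
        funext x
        exact deriv_fun_sub
          (((hitd V₂ hV₂s m).differentiable (by simp)).differentiableAt)
          (((hitd V₁ hV₁s m).differentiable (by simp)).differentiableAt)
  have hWd0 : ∀ m, m < n → Wd V₁ V₂ m 0 = 0 := by
    intro m hm
    rw [hWdval m]
    simp only
    rw [← hagree m hm]
    ring
  have hInv : ∀ i, HamInv V₁ (i+1) ((stepC V₁)^[i] chatC) := hamInv_dseq V₁ hV₁s
  have hp2eval : p₂ = evalSeq (2*n+1+1) (p2seq V₂) := by
    funext p
    obtain ⟨x, ξ⟩ := p
    simp only [evalSeq, hp₂def]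
    have hsub : ({0, 2} : Finset ℕ) ⊆ range (2*n+1+1) := by
      intro t ht
      simp only [Finset.mem_insert, Finset.mem_singleton] at ht
      rcases ht with rfl | rfl <;> exact mem_range.mpr (by omega)
    have hzero : ∀ t ∈ range (2*n+1+1), t ∉ ({0, 2} : Finset ℕ) →
        ξ^t * p2seq V₂ t x = 0 := by
      intro t _ hnt
      simp only [Finset.mem_insert, Finset.mem_singleton, not_or] at hnt
      simp [p2seq, hnt.1, hnt.2]
    rw [← Finset.sum_subset hsub hzero, Finset.sum_pair (by norm_num : (0:ℕ) ≠ 2)]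
    simp [p2seq]
    ring
  have hbridge : ∀ i, i + 1 ≤ 2*n →
      (hamVF V₁)^[i+1] p₂
        = evalSeq (2*n+1+1) (evalC V₁ V₂ (2*n+1+1) ((stepC V₁)^[i] chatC)) := by
    intro i
    induction i with
    | zero =>
        intro _
        have hd : ∀ j, Differentiable ℝ (p2seq V₂ j) := by
          intro j
          unfold p2seq
          split_ifs
          · exact hV₂s.differentiable (by simp)
          · exact differentiable_const 1
          · exact differentiable_const 0
        have hz : ∀ j, 2*n+1 ≤ j → p2seq V₂ j = 0 := by
          intro j hj
          unfold p2seq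
          rw [if_neg (by omega), if_neg (by omega)]
        simp only [zero_add, Function.iterate_one, Function.iterate_zero_apply]
        rw [hp2eval, hamVF_evalSeq V₁ (2*n+1) (p2seq V₂) hd hz,
          step_p2seq V₁ V₂ hV₁s hV₂s (2*n+1) (by omega)]
    | succ i ih =>
        intro hle
        have prev := ih (by omega)
        obtain ⟨hsmk, hsj, hsm2, htop⟩ := hInv i
        have hd2 : ∀ j, Differentiable ℝ (evalC V₁ V₂ (2*n+1+1) ((stepC V₁)^[i] chatC) j) := by
          intro j
          have : ContDiff ℝ ∞ (fun x => ∑ m ∈ range (2*n+1+1),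
              (stepC V₁)^[i] chatC j m x * Wd V₁ V₂ m x) :=
            ContDiff.sum fun m _ => (hsmk j m).mul (contDiff_Wd V₁ V₂ hV₁s hV₂s m)
          exact this.differentiable (by simp)
        have hz2 : ∀ j, 2*n+1 ≤ j → evalC V₁ V₂ (2*n+1+1) ((stepC V₁)^[i] chatC) j = 0 := by
          intro j hj
          funext x
          simp only [evalC]
          refine Finset.sum_eq_zero fun m _ => ?_
          rw [hsj j m (by omega)]
          simp
        have hsm3 : ∀ j m, Differentiable ℝ ((stepC V₁)^[i] chatC j m) :=
          fun j m => (hsmk j m).differentiable (by simp)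
        have hbd : ∀ j, (stepC V₁)^[i] chatC j (2*n+1) = 0 := by
          intro j
          by_cases hj : i + 3 ≤ j
          · exact hsj j (2*n+1) (by omega)
          · exact hsm2 j (2*n+1) (by omega)
        rw [Function.iterate_succ_apply', prev,
          hamVF_evalSeq V₁ (2*n+1) _ hd2 hz2,
          stepSeq_evalC V₁ V₂ hV₁s hV₂s (2*n+1) _ hsm3 hbd,
          ← Function.iterate_succ_apply' (stepC V₁) i chatC]
  have hvalue : ∀ i,
      evalSeq (2*n+1+1) (evalC V₁ V₂ (2*n+1+1) ((stepC V₁)^[i] chatC)) (0,0)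
        = ∑ m ∈ range (2*n+1+1), (stepC V₁)^[i] chatC 0 m 0 * Wd V₁ V₂ m 0 := by
    intro i
    simp only [evalSeq]
    rw [Finset.sum_eq_single 0]
    · simp only [pow_zero, one_mul]
      rfl
    · intro j _ hj
      simp [zero_pow hj]
    · intro h
      exact absurd (mem_range.mpr (by omega)) h
  have hfin : (hamVF V₁)^[2*n] p₂ (0,0) =
      (-1) ^ n * (((2 * n).factorial : ℝ) / (n.factorial : ℝ)) *
        (deriv V₁ 0) ^ n * (iteratedDeriv n V₂ 0 - iteratedDeriv n V₁ 0) := by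
    have h2n : 2*n - 1 + 1 = 2*n := by omega
    have hb := hbridge (2*n-1) (by omega)
    rw [h2n] at hb
    rw [hb, hvalue (2*n-1)]
    obtain ⟨hsmk, hsj, hsm2, htop⟩ := hInv (2*n-1)
    rw [h2n] at hsm2 htop
    rw [Finset.sum_eq_single n]
    · rw [htop 0 n 0 (by omega) (by omega)]
      have hWn : Wd V₁ V₂ n 0 = iteratedDeriv n V₂ 0 - iteratedDeriv n V₁ 0 := by
        rw [hWdval n]
      rw [hWn, show 2*n - n = n by omega]
      have key : ((Nc (2*n) 0 : ℕ) : ℝ) * (2^n * (n.factorial : ℝ)) = ((2*n).factorial : ℝ) := by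
        have h := Nc_eq (2*n) 0 n (by omega)
        rw [Nat.factorial_zero, one_mul] at h
        exact_mod_cast h
      have hNcR : ((Nc (2*n) 0 : ℕ) : ℝ) = ((2*n).factorial : ℝ) / (2^n * (n.factorial : ℝ)) := by
        rw [eq_div_iff (by positivity)]
        exact key
      rw [hNcR, neg_pow]
      have hfact : (n.factorial : ℝ) ≠ 0 := by positivity
      field_simp
    · intro m _ hm
      by_cases h2m : 2*n < 2*m
      · rw [hsm2 0 m (by omega)]
        simp
      · rw [hWd0 m (by omega)]
        simp
    · intro h
      exact absurd (mem_range.mpr (by omega)) h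
  refine ⟨?_, hfin, ?_⟩
  · intro k hk
    rcases Nat.eq_zero_or_pos k with rfl | hpos
    · simp only [Function.iterate_zero, id_eq, hp₂def]
      rw [hV₂0]
      norm_num
    · obtain ⟨i, rfl⟩ : ∃ i, k = i + 1 := ⟨k-1, by omega⟩
      rw [hbridge i (by omega), hvalue i]
      obtain ⟨hsmk, hsj, hsm2, htop⟩ := hInv i
      refine Finset.sum_eq_zero fun m _ => ?_
      by_cases h2m : i + 1 < 2*m
      · rw [hsm2 0 m (by omega)]
        simp
      · rw [hWd0 m (by omega)]
        simp
  · rw [hfin]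
    have h1 : ((-1:ℝ))^n ≠ 0 := pow_ne_zero _ (by norm_num)
    have h2 : (((2*n).factorial : ℝ))/((n.factorial : ℝ)) ≠ 0 := by positivity
    have h3 : (deriv V₁ 0)^n ≠ 0 := pow_ne_zero _ hV₁'
    have h4 : iteratedDeriv n V₂ 0 - iteratedDeriv n V₁ 0 ≠ 0 := sub_ne_zero.mpr (Ne.symm hneq)
    exact mul_ne_zero (mul_ne_zero (mul_ne_zero h1 h2) h3) h4
end

section
/- Let V be real-analytic near 0 with V(0) = 0, V'(0) > 0, and for real E near 0 let a(E) be the root of V = E near 0. Define ξ(x) = -( (3/2)∫_x^{a(E)} √(E - V(t)) dt )^{2/3} for x ≤ a(E) and ξ(x) = ( (3/2)∫_{a(E)}^x √(V(t) - E) dt )^{2/3} for x > a(E). Then ξ is differentiable near 0 and satisfies ξ(x)·ξ'(x)² = V(x) - E. -/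
/-!
Away from the turning point `a` the equation is the chain rule: for `B > 0` one has
`B ^ (2/3) * ((B ^ (2/3))') ^ 2 = (4/9) * B' ^ 2`, and `B' = ±(3/2) * √|V - E|` by the
fundamental theorem of calculus. At `a` both sides vanish, and differentiability comes from writing
`ξ x = (x - a) * ((3/2) * J x / ((x - a) * √|x - a|)) ^ (2/3)` with `J x = ∫_a^x √|V - E|`:
by L'Hôpital's rule the quotient tends to `(2/3) * √|V'(a)|`.
-/

open Filter Topology Set

theorem ContinuousOn.integral_hasDerivAt_right {f : ℝ → ℝ} {s : Set ℝ} {a x : ℝ}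
    (hs : IsOpen s) (hsc : s.OrdConnected) (hf : ContinuousOn f s) (ha : a ∈ s) (hx : x ∈ s) :
    HasDerivAt (fun u => ∫ t in a..u, f t) (f x) x :=
  intervalIntegral.integral_hasDerivAt_right
    ((hf.mono (hsc.uIcc_subset ha hx)).intervalIntegrable)
    (hf.stronglyMeasurableAtFilter hs x hx) (hf.continuousAt (hs.mem_nhds hx))

theorem ContinuousOn.integral_hasDerivAt_left {f : ℝ → ℝ} {s : Set ℝ} {b x : ℝ}
    (hs : IsOpen s) (hsc : s.OrdConnected) (hf : ContinuousOn f s) (hb : b ∈ s) (hx : x ∈ s) :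
    HasDerivAt (fun u => ∫ t in u..b, f t) (-f x) x :=
  intervalIntegral.integral_hasDerivAt_left
    ((hf.mono (hsc.uIcc_subset hx hb)).intervalIntegrable)
    (hf.stronglyMeasurableAtFilter hs x hx) (hf.continuousAt (hs.mem_nhds hx))

theorem hasDerivAt_sub_mul_sqrt_abs_sub {a x : ℝ} (hx : x ≠ a) :
    HasDerivAt (fun y => (y - a) * √|y - a|) (3 / 2 * √|x - a|) x := by
  have hxa : x - a ≠ 0 := sub_ne_zero.mpr hx
  have hsqrt : HasDerivAt (fun y => √|y - a|) (SignType.sign (x - a) / (2 * √|x - a|)) x := by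
    have habs : HasDerivAt (fun y => |y - a|) (SignType.sign (x - a)) x :=
      (hasDerivAt_abs hxa).comp_sub_const x a
    simpa using habs.sqrt (abs_ne_zero.mpr hxa)
  refine (((hasDerivAt_id x).sub_const a).mul hsqrt).congr_deriv ?_
  have hsq : √|x - a| * √|x - a| = |x - a| := Real.mul_self_sqrt (abs_nonneg _)
  rw [id, mul_div_assoc', self_mul_sign]
  field_simp
  linarith

theorem mul_rpow_two_thirds_div_mul_sqrt {P u : ℝ} (hP : 0 ≤ P) (hu : 0 < u) :
    u * (P / (u * √u)) ^ (2 / 3 : ℝ) = P ^ (2 / 3 : ℝ) := by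
  have hu32 : u * √u = u ^ (3 / 2 : ℝ) := by
    rw [Real.sqrt_eq_rpow, ← Real.rpow_one_add' hu.le (by norm_num)]; norm_num
  rw [hu32, Real.div_rpow hP (by positivity), ← Real.rpow_mul hu.le]
  norm_num
  field_simp

theorem rpow_two_thirds_mul_deriv_sq {b : ℝ} (hb : 0 < b) (b' : ℝ) :
    b ^ (2 / 3 : ℝ) * (b' * (2 / 3) * b ^ ((2 / 3 : ℝ) - 1)) ^ 2 = 4 / 9 * b' ^ 2 := by
  have h : b ^ (2 / 3 : ℝ) * (b ^ ((2 / 3 : ℝ) - 1)) ^ 2 = 1 := by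
    rw [← Real.rpow_natCast, ← Real.rpow_mul hb.le, ← Real.rpow_add hb]; norm_num
  linear_combination (4 / 9 * b' ^ 2) * h

theorem hasDerivAt_of_eq_sub_mul {f φ : ℝ → ℝ} {a l : ℝ} (hfa : f a = 0)
    (hf : ∀ᶠ x in 𝓝[≠] a, f x = (x - a) * φ x) (hφ : Tendsto φ (𝓝[≠] a) (𝓝 l)) :
    HasDerivAt f l a := by
  rw [hasDerivAt_iff_tendsto_slope]
  refine hφ.congr' ?_
  filter_upwards [hf, self_mem_nhdsWithin] with x hx hxa
  rw [slope_def_field, hx, hfa, sub_zero, mul_div_cancel_left₀ _ (sub_ne_zero.mpr hxa)]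

theorem tendsto_integral_sqrt_abs_sub_div {V : ℝ → ℝ} {s : Set ℝ} {a : ℝ}
    (hs : IsOpen s) (hsc : s.OrdConnected) (hV : ContinuousOn V s) (hVa : DifferentiableAt ℝ V a)
    (ha : a ∈ s) :
    Tendsto (fun x => (∫ t in a..x, √|V t - V a|) / ((x - a) * √|x - a|)) (𝓝[≠] a)
      (𝓝 (2 / 3 * √|deriv V a|)) := by
  have hf : ContinuousOn (fun t => √|V t - V a|) s := (hV.sub continuousOn_const).abs.sqrt
  have hJ : ∀ x ∈ s, HasDerivAt (fun u => ∫ t in a..u, √|V t - V a|) (√|V x - V a|) x :=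
    fun x hx => ContinuousOn.integral_hasDerivAt_right hs hsc hf ha hx
  have hs_near : ∀ᶠ x in 𝓝[≠] a, x ∈ s := nhdsWithin_le_nhds (hs.mem_nhds ha)
  have hslope :
      Tendsto (fun x => 2 / 3 * √|slope V a x|) (𝓝[≠] a) (𝓝 (2 / 3 * √|deriv V a|)) :=
    ((hasDerivAt_iff_tendsto_slope.mp hVa.hasDerivAt).abs.sqrt).const_mul _
  refine HasDerivAt.lhopital_zero_nhdsNE (hs_near.mono hJ)
    (eventually_mem_nhdsWithin.mono fun x hx => hasDerivAt_sub_mul_sqrt_abs_sub hx)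
    (eventually_mem_nhdsWithin.mono fun x hx => ?_) ?_ ?_ (hslope.congr' ?_)
  · exact mul_ne_zero (by norm_num) (Real.sqrt_pos.mpr (abs_pos.mpr (sub_ne_zero.mpr hx))).ne'
  · simpa using ((hJ a ha).continuousAt.tendsto).mono_left nhdsWithin_le_nhds
  · have : Continuous fun x => (x - a) * √|x - a| := by fun_prop
    simpa using (this.tendsto a).mono_left nhdsWithin_le_nhds
  · filter_upwards [eventually_mem_nhdsWithin] with x hx
    have hxa : 0 < |x - a| := abs_pos.mpr (sub_ne_zero.mpr hx)
    rw [slope_def_field, abs_div, Real.sqrt_div (abs_nonneg _)]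
    field_simp

noncomputable def langerXi (V : ℝ → ℝ) (E a x : ℝ) : ℝ :=
  if x ≤ a then -((3 / 2 * ∫ t in x..a, √(E - V t)) ^ ((2 : ℝ) / 3))
  else (3 / 2 * ∫ t in a..x, √(V t - E)) ^ ((2 : ℝ) / 3)

section langerXi

variable {V : ℝ → ℝ} {E a x : ℝ} {s : Set ℝ}

theorem langerXi_self : langerXi V E a a = 0 := by
  simp [langerXi]

theorem hasDerivAt_langerXi_of_gt (hs : IsOpen s) (hsc : s.OrdConnected) (hV : ContinuousOn V s)
    (ha : a ∈ s) (hright : ∀ t ∈ s, a < t → E < V t) (hx : x ∈ s) (hax : a < x) :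
    ∃ d, HasDerivAt (langerXi V E a) d x ∧ langerXi V E a x * d ^ 2 = V x - E := by
  have hf : ContinuousOn (fun t => √(V t - E)) s := (hV.sub continuousOn_const).sqrt
  set B := fun u => 3 / 2 * ∫ t in a..u, √(V t - E)
  have hB : HasDerivAt B (3 / 2 * √(V x - E)) x :=
    (ContinuousOn.integral_hasDerivAt_right hs hsc hf ha hx).const_mul _
  have hBpos : 0 < B x := by
    refine mul_pos (by norm_num) (intervalIntegral.intervalIntegral_pos_of_pos_on
      (hf.mono (hsc.uIcc_subset ha hx)).intervalIntegrable (fun t ht => ?_) hax)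
    exact Real.sqrt_pos.mpr (sub_pos.mpr (hright t (hsc.out ha hx (Ioo_subset_Icc_self ht)) ht.1))
  have hξ : langerXi V E a =ᶠ[𝓝 x] fun u => B u ^ (2 / 3 : ℝ) := by
    filter_upwards [Ioi_mem_nhds hax] with u hu
    exact if_neg (not_le.mpr hu)
  refine ⟨_, (hB.rpow_const (Or.inl hBpos.ne')).congr_of_eventuallyEq hξ, ?_⟩
  rw [hξ.eq_of_nhds, rpow_two_thirds_mul_deriv_sq hBpos, mul_pow,
    Real.sq_sqrt (sub_pos.mpr (hright x hx hax)).le]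
  ring

theorem hasDerivAt_langerXi_of_lt (hs : IsOpen s) (hsc : s.OrdConnected) (hV : ContinuousOn V s)
    (ha : a ∈ s) (hleft : ∀ t ∈ s, t < a → V t < E) (hx : x ∈ s) (hxa : x < a) :
    ∃ d, HasDerivAt (langerXi V E a) d x ∧ langerXi V E a x * d ^ 2 = V x - E := by
  have hf : ContinuousOn (fun t => √(E - V t)) s := (continuousOn_const.sub hV).sqrt
  set B := fun u => 3 / 2 * ∫ t in u..a, √(E - V t)
  have hB : HasDerivAt B (3 / 2 * -√(E - V x)) x :=
    (ContinuousOn.integral_hasDerivAt_left hs hsc hf ha hx).const_mul _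
  have hBpos : 0 < B x := by
    refine mul_pos (by norm_num) (intervalIntegral.intervalIntegral_pos_of_pos_on
      (hf.mono (hsc.uIcc_subset hx ha)).intervalIntegrable (fun t ht => ?_) hxa)
    exact Real.sqrt_pos.mpr (sub_pos.mpr (hleft t (hsc.out hx ha (Ioo_subset_Icc_self ht)) ht.2))
  have hξ : langerXi V E a =ᶠ[𝓝 x] fun u => -B u ^ (2 / 3 : ℝ) := by
    filter_upwards [Iio_mem_nhds hxa] with u hu
    exact if_pos hu.le
  refine ⟨_, (hB.rpow_const (Or.inl hBpos.ne')).neg.congr_of_eventuallyEq hξ, ?_⟩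
  rw [hξ.eq_of_nhds, neg_sq, neg_mul, rpow_two_thirds_mul_deriv_sq hBpos, mul_pow, neg_sq,
    Real.sq_sqrt (sub_pos.mpr (hleft x hx hxa)).le]
  ring

theorem langerXi_eq_sub_mul (hsc : s.OrdConnected) (ha : a ∈ s) (haE : V a = E)
    (hleft : ∀ t ∈ s, t < a → V t < E) (hright : ∀ t ∈ s, a < t → E < V t)
    (hx : x ∈ s) (hxa : x ≠ a) :
    langerXi V E a x =
      (x - a) *
        (3 / 2 * ((∫ t in a..x, √|V t - E|) / ((x - a) * √|x - a|))) ^ (2 / 3 : ℝ) := by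
  rcases hxa.lt_or_gt with hxa | hax
  · have hint : ∫ t in a..x, √|V t - E| = -∫ t in x..a, √(E - V t) := by
      rw [intervalIntegral.integral_symm]
      refine congrArg _ (intervalIntegral.integral_congr fun t ht => ?_)
      rw [uIcc_of_le hxa.le] at ht
      have hVt : V t ≤ E := by
        rcases ht.2.lt_or_eq with hta | rfl
        · exact (hleft t (hsc.out hx ha ht) hta).le
        · exact haE.le
      simp only [abs_of_nonpos (sub_nonpos.mpr hVt), neg_sub]
    have hP : 0 ≤ 3 / 2 * ∫ t in x..a, √(E - V t) :=
      mul_nonneg (by norm_num)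
        (intervalIntegral.integral_nonneg hxa.le fun _ _ => Real.sqrt_nonneg _)
    have hq : 3 / 2 * (-(∫ t in x..a, √(E - V t)) / ((x - a) * √(a - x))) =
        3 / 2 * (∫ t in x..a, √(E - V t)) / ((a - x) * √(a - x)) := by
      rw [show x - a = -(a - x) by ring, neg_mul, div_neg, neg_div, neg_neg, mul_div_assoc]
    rw [langerXi, if_pos hxa.le, hint, abs_of_neg (sub_neg.mpr hxa), neg_sub, hq,
      ← mul_rpow_two_thirds_div_mul_sqrt hP (sub_pos.mpr hxa)]
    ring
  · have hint : ∫ t in a..x, √|V t - E| = ∫ t in a..x, √(V t - E) := by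
      refine intervalIntegral.integral_congr fun t ht => ?_
      rw [uIcc_of_le hax.le] at ht
      have hVt : E ≤ V t := by
        rcases ht.1.lt_or_eq with hat | rfl
        · exact (hright t (hsc.out ha hx ht) hat).le
        · exact haE.ge
      simp only [abs_of_nonneg (sub_nonneg.mpr hVt)]
    have hP : 0 ≤ 3 / 2 * ∫ t in a..x, √(V t - E) :=
      mul_nonneg (by norm_num)
        (intervalIntegral.integral_nonneg hax.le fun _ _ => Real.sqrt_nonneg _)
    rw [langerXi, if_neg (not_le.mpr hax), hint, abs_of_pos (sub_pos.mpr hax), mul_div_assoc',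
      mul_rpow_two_thirds_div_mul_sqrt hP (sub_pos.mpr hax)]

theorem hasDerivAt_langerXi_self (hs : IsOpen s) (hsc : s.OrdConnected) (hV : ContinuousOn V s)
    (hVa : DifferentiableAt ℝ V a) (ha : a ∈ s) (haE : V a = E)
    (hleft : ∀ t ∈ s, t < a → V t < E) (hright : ∀ t ∈ s, a < t → E < V t) :
    HasDerivAt (langerXi V E a) (|deriv V a| ^ (1 / 3 : ℝ)) a := by
  have hlim : (3 / 2 * (2 / 3 * √|deriv V a|)) ^ (2 / 3 : ℝ) = |deriv V a| ^ (1 / 3 : ℝ) := by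
    rw [← mul_assoc, show (3 / 2 * (2 / 3) : ℝ) = 1 by norm_num, one_mul, Real.sqrt_eq_rpow,
      ← Real.rpow_mul (abs_nonneg _)]
    norm_num
  refine hasDerivAt_of_eq_sub_mul langerXi_self ?_ (hlim ▸
    ((haE ▸ tendsto_integral_sqrt_abs_sub_div hs hsc hV hVa ha).const_mul _).rpow_const
      (Or.inr (by norm_num)))
  filter_upwards [nhdsWithin_le_nhds (hs.mem_nhds ha), eventually_mem_nhdsWithin] with x hx hxa
  exact langerXi_eq_sub_mul hsc ha haE hleft hright hx hxa

end langerXi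

theorem xi_equation_general (V : ℝ → ℝ) (E a δ : ℝ)
    (hV : ∀ x ∈ Set.Ioo (-δ) δ, AnalyticAt ℝ V x)
    (ha : a ∈ Set.Ioo (-δ) δ) (haE : V a = E)
    (hleft : ∀ t ∈ Set.Ioo (-δ) δ, t < a → V t < E)
    (hright : ∀ t ∈ Set.Ioo (-δ) δ, a < t → E < V t) :
    ∀ x ∈ Set.Ioo (-δ) δ,
      DifferentiableAt ℝ
        (fun x : ℝ =>
          if x ≤ a then
            -((3 / 2 * ∫ t in x..a, Real.sqrt (E - V t)) ^ ((2 : ℝ) / 3))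
          else (3 / 2 * ∫ t in a..x, Real.sqrt (V t - E)) ^ ((2 : ℝ) / 3)) x ∧
      (fun x : ℝ =>
          if x ≤ a then
            -((3 / 2 * ∫ t in x..a, Real.sqrt (E - V t)) ^ ((2 : ℝ) / 3))
          else (3 / 2 * ∫ t in a..x, Real.sqrt (V t - E)) ^ ((2 : ℝ) / 3)) x *
        (deriv (fun x : ℝ =>
          if x ≤ a then
            -((3 / 2 * ∫ t in x..a, Real.sqrt (E - V t)) ^ ((2 : ℝ) / 3))
          else (3 / 2 * ∫ t in a..x, Real.sqrt (V t - E)) ^ ((2 : ℝ) / 3)) x) ^ 2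
        = V x - E := by
  intro x hx
  change DifferentiableAt ℝ (langerXi V E a) x ∧
    langerXi V E a x * deriv (langerXi V E a) x ^ 2 = V x - E
  have hVc : ContinuousOn V (Set.Ioo (-δ) δ) :=
    fun y hy => (hV y hy).continuousAt.continuousWithinAt
  rcases lt_trichotomy x a with hxa | rfl | hax
  · obtain ⟨d, hd, hξ⟩ :=
      hasDerivAt_langerXi_of_lt isOpen_Ioo ordConnected_Ioo hVc ha hleft hx hxa
    exact ⟨hd.differentiableAt, hd.deriv ▸ hξ⟩
  · refine ⟨(hasDerivAt_langerXi_self isOpen_Ioo ordConnected_Ioo hVc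
      (hV x hx).differentiableAt hx haE hleft hright).differentiableAt, ?_⟩
    rw [langerXi_self, zero_mul, haE, sub_self]
  · obtain ⟨d, hd, hξ⟩ :=
      hasDerivAt_langerXi_of_gt isOpen_Ioo ordConnected_Ioo hVc ha hright hx hax
    exact ⟨hd.differentiableAt, hd.deriv ▸ hξ⟩

/-- With `V` real-analytic near `0`, `V(0)=0`, `V'(0)>0`, `E` real
near `0` and `a = a(E)` the root of `V = E` near `0`, the function
`ξ(x) = -((3/2)∫_x^a √(E-V(t)) dt)^{2/3}` for `x ≤ a`,
`ξ(x) = ((3/2)∫_a^x √(V(t)-E) dt)^{2/3}` for `x > a`,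
is differentiable near `0` and satisfies `ξ(x)·ξ'(x)² = V(x) − E`. -/
theorem xi_equation (V : ℝ → ℝ) (E a δ : ℝ) (hδ : 0 < δ)
    (hV : ∀ x ∈ Set.Ioo (-δ) δ, AnalyticAt ℝ V x)
    (hV0 : V 0 = 0) (hV' : 0 < deriv V 0)
    (ha : a ∈ Set.Ioo (-δ) δ) (haE : V a = E)
    (hleft : ∀ t ∈ Set.Ioo (-δ) δ, t < a → V t < E)
    (hright : ∀ t ∈ Set.Ioo (-δ) δ, a < t → E < V t) :
    ∀ x ∈ Set.Ioo (-δ) δ,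
      DifferentiableAt ℝ
        (fun x : ℝ =>
          if x ≤ a then
            -((3 / 2 * ∫ t in x..a, Real.sqrt (E - V t)) ^ ((2 : ℝ) / 3))
          else (3 / 2 * ∫ t in a..x, Real.sqrt (V t - E)) ^ ((2 : ℝ) / 3)) x ∧
      (fun x : ℝ =>
          if x ≤ a then
            -((3 / 2 * ∫ t in x..a, Real.sqrt (E - V t)) ^ ((2 : ℝ) / 3))
          else (3 / 2 * ∫ t in a..x, Real.sqrt (V t - E)) ^ ((2 : ℝ) / 3)) x *
        (deriv (fun x : ℝ =>
          if x ≤ a then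
            -((3 / 2 * ∫ t in x..a, Real.sqrt (E - V t)) ^ ((2 : ℝ) / 3))
          else (3 / 2 * ∫ t in a..x, Real.sqrt (V t - E)) ^ ((2 : ℝ) / 3)) x) ^ 2
        = V x - E :=
  xi_equation_general V E a δ hV ha haE hleft hright
end
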